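/- Let 0 ≤ β < 1 and R > 0, and define K_R : (0,∞) → [0,∞) by K_R(x) = x^{1−2β} ∫_ℝ (t²+1)^{−β} χ_R(1/(x²(t²+1))) dt, where χ_R is the indicator of [R,∞). Then ∫_0^∞ K_R(x) dx = π / ((2 − 2β) R^{1−β}); in particular ∫_0^∞ K_R(x) dx tends to 0 as R → ∞. -/

import Mathlib

open Filter Topology MeasureTheory

/-- `χ_R`, the indicator function of `[R,∞)`. -/
noncomputable def chiR (R x : ℝ) : ℝ := if R ≤ x then 1 else 0

/-- `K_R(x) = x^{1−2β} ∫_ℝ (t²+1)^{−β} χ_R(1/(x²(t²+1))) dt`. -/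
noncomputable def KR (β R x : ℝ) : ℝ :=
  x ^ (1 - 2 * β) * ∫ t : ℝ, ((t ^ 2 + 1) ^ (-β) * chiR R (1 / (x ^ 2 * (t ^ 2 + 1))))

lemma chiR_nonneg (R y : ℝ) : 0 ≤ chiR R y := by
  rw [chiR]; split <;> norm_num

/-- Pointwise identification of the integrand with an indicator function, for `x > 0`. -/
lemma f_eq_indicator {β R : ℝ} (hR : 0 < R) (t : ℝ) {x : ℝ} (hx : 0 < x) :
    x ^ (1 - 2 * β) * ((t ^ 2 + 1) ^ (-β) * chiR R (1 / (x ^ 2 * (t ^ 2 + 1)))) =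
    Set.indicator (Set.Ioc 0 (Real.sqrt (1 / (R * (t ^ 2 + 1)))))
      (fun x => x ^ (1 - 2 * β) * (t ^ 2 + 1) ^ (-β)) x := by
  have ht : (0:ℝ) < t ^ 2 + 1 := by positivity
  have hx2 : (0:ℝ) < x ^ 2 * (t ^ 2 + 1) := by positivity
  have hRt : (0:ℝ) < R * (t ^ 2 + 1) := by positivity
  have hiff : R ≤ 1 / (x ^ 2 * (t ^ 2 + 1)) ↔ x ≤ Real.sqrt (1 / (R * (t ^ 2 + 1))) := by
    rw [Real.le_sqrt hx.le (by positivity), le_div_iff₀ hx2, le_div_iff₀ hRt]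
    constructor <;> intro h <;> nlinarith
  rw [chiR]
  by_cases h : x ≤ Real.sqrt (1 / (R * (t ^ 2 + 1)))
  · rw [if_pos (hiff.mpr h), Set.indicator_of_mem (Set.mem_Ioc.mpr ⟨hx, h⟩)]; ring
  · rw [if_neg fun hc => h (hiff.mp hc), Set.indicator_of_notMem fun hc => h hc.2]; ring

lemma integral_rpow_Ioc {β b : ℝ} (hβ1 : β < 1) (hb : 0 < b) :
    ∫ x in Set.Ioc (0:ℝ) b, x ^ (1 - 2 * β) = b ^ (2 - 2 * β) / (2 - 2 * β) := by
  rw [← intervalIntegral.integral_of_le hb.le, integral_rpow (Or.inl (by linarith)),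
    Real.zero_rpow (by intro h; nlinarith : (1 - 2 * β) + 1 ≠ 0)]
  norm_num
  rw [show (1 : ℝ) - 2 * β + 1 = 2 - 2 * β by ring]

lemma measurable_f {β R : ℝ} :
    Measurable (Function.uncurry fun x t : ℝ =>
      x ^ (1 - 2 * β) * ((t ^ 2 + 1) ^ (-β) * chiR R (1 / (x ^ 2 * (t ^ 2 + 1))))) := by
  have hg : Measurable fun p : ℝ × ℝ => 1 / (p.1 ^ 2 * (p.2 ^ 2 + 1)) := by
    simp only [one_div]
    exact ((measurable_fst.pow_const 2).mul ((measurable_snd.pow_const 2).add_const 1)).inv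
  apply Measurable.mul
  · exact (by fun_prop : Measurable fun p : ℝ × ℝ => p.1 ^ (1 - 2 * β))
  · apply Measurable.mul
    · exact (by fun_prop : Measurable fun p : ℝ × ℝ => (p.2 ^ 2 + 1) ^ (-β))
    · simp only [chiR]
      exact Measurable.ite (measurableSet_le measurable_const hg)
        measurable_const measurable_const

lemma sqrt_rpow_eq {β R t : ℝ} (hR : 0 < R) (hβ1 : β < 1) :
    Real.sqrt (1 / (R * (t ^ 2 + 1))) ^ (2 - 2 * β) = R ^ (β - 1) * (t ^ 2 + 1) ^ (β - 1) := by
  have ht : (0:ℝ) < t ^ 2 + 1 := by positivity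
  have hRt : (0:ℝ) < R * (t ^ 2 + 1) := by positivity
  rw [Real.sqrt_eq_rpow, ← Real.rpow_mul (by positivity : (0:ℝ) ≤ 1 / (R * (t ^ 2 + 1))),
    show (1 / 2 : ℝ) * (2 - 2 * β) = 1 - β by ring, one_div,
    ← Real.rpow_neg_one (R * (t ^ 2 + 1)), ← Real.rpow_mul hRt.le,
    show (-1 : ℝ) * (1 - β) = β - 1 by ring, Real.mul_rpow hR.le ht.le]

/-- The inner integral in `x`, computed in closed form. -/
lemma integral_x_eq {β R : ℝ} (hR : 0 < R) (hβ1 : β < 1) (t : ℝ) :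
    ∫ x in Set.Ioi (0:ℝ),
        x ^ (1 - 2 * β) * ((t ^ 2 + 1) ^ (-β) * chiR R (1 / (x ^ 2 * (t ^ 2 + 1)))) =
      R ^ (β - 1) / (2 - 2 * β) * (t ^ 2 + 1)⁻¹ := by
  have ht : (0:ℝ) < t ^ 2 + 1 := by positivity
  have hb : 0 < Real.sqrt (1 / (R * (t ^ 2 + 1))) := Real.sqrt_pos.mpr (by positivity)
  rw [setIntegral_congr_fun measurableSet_Ioi
    (fun x hx => f_eq_indicator hR t (Set.mem_Ioi.mp hx)),
    setIntegral_indicator measurableSet_Ioc,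
    Set.inter_eq_self_of_subset_right Set.Ioc_subset_Ioi_self,
    integral_mul_const, integral_rpow_Ioc hβ1 hb, sqrt_rpow_eq hR hβ1]
  have hc : (t ^ 2 + 1 : ℝ) ^ (β - 1) * (t ^ 2 + 1) ^ (-β) = (t ^ 2 + 1)⁻¹ := by
    rw [← Real.rpow_add ht, show β - 1 + -β = -1 by ring, Real.rpow_neg_one]
  linear_combination (R ^ (β - 1) / (2 - 2 * β)) * hc

lemma f_integrable {β R : ℝ} (hβ0 : 0 ≤ β) (hβ1 : β < 1) (hR : 0 < R) :
    Integrable (Function.uncurry fun x t : ℝ =>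
      x ^ (1 - 2 * β) * ((t ^ 2 + 1) ^ (-β) * chiR R (1 / (x ^ 2 * (t ^ 2 + 1)))))
      ((volume.restrict (Set.Ioi 0)).prod volume) := by
  have hnonneg : ∀ t : ℝ, ∀ x ∈ Set.Ioi (0:ℝ),
      0 ≤ x ^ (1 - 2 * β) * ((t ^ 2 + 1) ^ (-β) * chiR R (1 / (x ^ 2 * (t ^ 2 + 1)))) := by
    intro t x hx
    have h1 : (0:ℝ) ≤ x ^ (1 - 2 * β) := Real.rpow_nonneg (le_of_lt hx) _
    have h2 : (0:ℝ) ≤ (t ^ 2 + 1) ^ (-β) := Real.rpow_nonneg (by positivity) _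
    have h3 := chiR_nonneg R (1 / (x ^ 2 * (t ^ 2 + 1)))
    positivity
  rw [integrable_prod_iff' measurable_f.aestronglyMeasurable]
  constructor
  · refine Eventually.of_forall fun t => ?_
    have hint : Integrable (Set.indicator (Set.Ioc 0 (Real.sqrt (1 / (R * (t ^ 2 + 1)))))
        (fun x => x ^ (1 - 2 * β) * (t ^ 2 + 1) ^ (-β))) volume := by
      rw [integrable_indicator_iff measurableSet_Ioc]
      exact ((intervalIntegral.intervalIntegrable_rpow'
        (by linarith : (-1:ℝ) < 1 - 2 * β)).1).mul_const _
    refine (hint.restrict (s := Set.Ioi 0)).congr ?_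
    rw [Filter.EventuallyEq, ae_restrict_iff' measurableSet_Ioi]
    exact Eventually.of_forall fun x hx => (f_eq_indicator hR t (Set.mem_Ioi.mp hx)).symm
  · have hkey : ∀ t : ℝ, (∫ x in Set.Ioi (0:ℝ),
        ‖x ^ (1 - 2 * β) * ((t ^ 2 + 1) ^ (-β) * chiR R (1 / (x ^ 2 * (t ^ 2 + 1))))‖) =
        R ^ (β - 1) / (2 - 2 * β) * (t ^ 2 + 1)⁻¹ := by
      intro t
      rw [setIntegral_congr_fun measurableSet_Ioi
        (fun x hx => Real.norm_of_nonneg (hnonneg t x hx))]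
      exact integral_x_eq hR hβ1 t
    simp only [Function.uncurry_apply_pair, hkey]
    have := (integrable_inv_one_add_sq.const_mul (R ^ (β - 1) / (2 - 2 * β)))
    refine this.congr ?_
    refine Eventually.of_forall fun t => ?_
    simp [add_comm (t ^ 2) 1]

/-- For `0 ≤ β < 1` and `R > 0`: `∫_0^∞ K_R(x) dx = π/((2−2β) R^{1−β})`; in particular the
integral tends to `0` as `R → ∞`. -/
theorem integral_KR (β : ℝ) (hβ0 : 0 ≤ β) (hβ1 : β < 1) :
    (∀ R : ℝ, 0 < R →
      (∫ x in Set.Ioi (0 : ℝ), KR β R x) = Real.pi / ((2 - 2 * β) * R ^ (1 - β))) ∧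
    Tendsto (fun R : ℝ => ∫ x in Set.Ioi (0 : ℝ), KR β R x) atTop (𝓝 0) := by
  have h2β : (0:ℝ) < 2 - 2 * β := by linarith
  have main : ∀ R : ℝ, 0 < R →
      (∫ x in Set.Ioi (0 : ℝ), KR β R x) = Real.pi / ((2 - 2 * β) * R ^ (1 - β)) := by
    intro R hR
    have h1 : (∫ x in Set.Ioi (0 : ℝ), KR β R x) =
        ∫ x in Set.Ioi (0:ℝ), ∫ t : ℝ,
          x ^ (1 - 2 * β) * ((t ^ 2 + 1) ^ (-β) * chiR R (1 / (x ^ 2 * (t ^ 2 + 1)))) := by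
      refine setIntegral_congr_fun measurableSet_Ioi fun x _ => ?_
      rw [KR, ← integral_const_mul]
    rw [h1, integral_integral_swap (f_integrable hβ0 hβ1 hR)]
    have h2 : ∀ t : ℝ, (∫ x in Set.Ioi (0:ℝ),
        x ^ (1 - 2 * β) * ((t ^ 2 + 1) ^ (-β) * chiR R (1 / (x ^ 2 * (t ^ 2 + 1))))) =
        R ^ (β - 1) / (2 - 2 * β) * (t ^ 2 + 1)⁻¹ := fun t => integral_x_eq hR hβ1 t
    simp only [h2]
    rw [integral_const_mul]
    have h3 : (∫ t : ℝ, (t ^ 2 + 1)⁻¹) = Real.pi := by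
      rw [show (fun t : ℝ => (t ^ 2 + 1)⁻¹) = fun t : ℝ => (1 + t ^ 2)⁻¹ by
        funext t; rw [add_comm]]
      exact integral_univ_inv_one_add_sq
    rw [h3, show β - 1 = -(1 - β) by ring, Real.rpow_neg hR.le]
    have hRp : (0:ℝ) < R ^ (1 - β) := Real.rpow_pos_of_pos hR _
    rw [eq_div_iff (by positivity : ((2 - 2 * β) * R ^ (1 - β)) ≠ 0)]
    field_simp
    exact div_self (by linarith)
  refine ⟨main, ?_⟩
  have heq : (fun R : ℝ => ∫ x in Set.Ioi (0 : ℝ), KR β R x) =ᶠ[atTop]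
      fun R => Real.pi / ((2 - 2 * β) * R ^ (1 - β)) := by
    filter_upwards [eventually_gt_atTop 0] with R hR using main R hR
  refine Tendsto.congr' heq.symm ?_
  have h4 : Tendsto (fun R : ℝ => (R ^ (1 - β))⁻¹) atTop (𝓝 0) :=
    tendsto_inv_atTop_zero.comp (tendsto_rpow_atTop (by linarith))
  have h5 := h4.const_mul (Real.pi / (2 - 2 * β))
  rw [mul_zero] at h5
  refine h5.congr fun R => ?_
  rw [← div_eq_mul_inv, div_div]
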